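/- arXiv:0705.1023 — 5 statements merged into one kernel-verified Lean document; each statement's English description precedes it below -/
import Mathlib

section
/- Let F, G be closed subspaces of a Hilbert space with ‖P_F − P_G‖ < 1. Then ‖P_F P_{G⊥}‖ = ‖P_G P_{F⊥}‖ = ‖P_F − P_G‖. -/
/-!
Write `p, q` for the two projections, `p⊥ = 1 - p`, `q⊥ = 1 - q` and `d = (p - q)²`. Then `d`
commutes with `p` and `q`, `d p = (p q⊥)(p q⊥)*` and `d p⊥ = (q p⊥)*(q p⊥)`, so splitting
`H = range p ⊕ ker p` gives `‖p - q‖² = ‖d‖ = max (‖p q⊥‖², ‖q p⊥‖²)` for any two projections.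
When `‖p - q‖ < 1`, Kato's operator `u = p q + p⊥ q⊥` satisfies `u* u = u u* = 1 - d`, hence is
invertible, and `u q = p u`; so `u` conjugates `d q` to `d p`. Both are self-adjoint, so their
norms `‖q p⊥‖²` and `‖p q⊥‖²` are equal spectral radii.
-/

open ContinuousLinearMap

variable {H : Type*} [NormedAddCommGroup H] [InnerProductSpace ℂ H] [CompleteSpace H]

/-- The orthogonal projection onto a closed subspace, as an operator on `H`. -/
noncomputable def projOf (F : Submodule ℂ H) [CompleteSpace F] : H →L[ℂ] H :=
  F.subtypeL ∘L F.orthogonalProjectionOnto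

/-- Kato's operator, carrying `range q` into `range p` and `ker q` into `ker p`. -/
def projIntertwiner {R : Type*} [Ring R] (p q : R) : R := p * q + (1 - p) * (1 - q)

namespace IsIdempotentElem

section Ring

variable {R : Type*} [Ring R] {p q : R}

lemma sub_mul_self_mul_left (hp : IsIdempotentElem p) (hq : IsIdempotentElem q) :
    (p - q) * (p - q) * p = p * (1 - q) * ((1 - q) * p) := by
  simp only [mul_sub, sub_mul, mul_one, one_mul, mul_assoc, hp.eq, hq.eq, hq.mul_self_mul]
  abel

lemma commute_sub_mul_self_left (hp : IsIdempotentElem p) (hq : IsIdempotentElem q) :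
    Commute ((p - q) * (p - q)) p := by
  simp only [Commute, SemiconjBy, mul_sub, sub_mul, mul_assoc, hp.eq, hq.eq, hp.mul_self_mul]
  abel

lemma commute_sub_mul_self_projIntertwiner (hp : IsIdempotentElem p) (hq : IsIdempotentElem q) :
    Commute ((p - q) * (p - q)) (projIntertwiner p q) := by
  have hdp := hp.commute_sub_mul_self_left hq
  have hdq : Commute ((p - q) * (p - q)) q := by
    simpa only [← neg_sub q p, neg_mul_neg] using hq.commute_sub_mul_self_left hp
  exact (hdp.mul_right hdq).add_right
    (((Commute.one_right _).sub_right hdp).mul_right ((Commute.one_right _).sub_right hdq))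

lemma projIntertwiner_mul_right (hp : IsIdempotentElem p) (hq : IsIdempotentElem q) :
    projIntertwiner p q * q = p * projIntertwiner p q := by
  simp only [projIntertwiner, mul_sub, sub_mul, add_mul, mul_add, mul_one, one_mul, mul_assoc,
    hp.eq, hq.eq, hp.mul_self_mul]
  abel

lemma projIntertwiner_swap_mul (hp : IsIdempotentElem p) (hq : IsIdempotentElem q) :
    projIntertwiner q p * projIntertwiner p q = 1 - (p - q) * (p - q) := by
  simp only [projIntertwiner, mul_sub, sub_mul, add_mul, mul_add, mul_one, one_mul, mul_assoc,
    hp.eq, hq.eq, hp.mul_self_mul]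
  abel

lemma spectrum_sub_mul_self_mul_right {S : Type*} [CommSemiring S] [Algebra S R]
    (hp : IsIdempotentElem p) (hq : IsIdempotentElem q) (hu : IsUnit (projIntertwiner p q)) :
    spectrum S ((p - q) * (p - q) * q) = spectrum S ((p - q) * (p - q) * p) := by
  obtain ⟨u, hu⟩ := hu
  have hconj : (u : R) * ((p - q) * (p - q) * q) * ↑u⁻¹ = (p - q) * (p - q) * p := by
    rw [Units.mul_inv_eq_iff_eq_mul, hu, ← mul_assoc,
      ← (hp.commute_sub_mul_self_projIntertwiner hq).eq, mul_assoc,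
      hp.projIntertwiner_mul_right hq, ← mul_assoc]
  rw [← hconj, spectrum.units_conjugate]

end Ring

lemma isUnit_projIntertwiner {R : Type*} [NormedRing R] [CompleteSpace R] {p q : R}
    (hp : IsIdempotentElem p) (hq : IsIdempotentElem q) (h : ‖p - q‖ < 1) :
    IsUnit (projIntertwiner p q) := by
  have hd : ‖(p - q) * (p - q)‖ < 1 :=
    (norm_mul_le _ _).trans_lt (by nlinarith [norm_nonneg (p - q)])
  obtain ⟨w, hw⟩ := isUnit_one_sub_of_norm_lt_one hd
  have hw' : projIntertwiner p q * projIntertwiner q p = w := by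
    rw [hq.projIntertwiner_swap_mul hp, hw, ← neg_sub q p, neg_mul_neg]
  refine isUnit_iff_exists_and_exists.2
    ⟨⟨projIntertwiner q p * ↑w⁻¹, ?_⟩, ⟨↑w⁻¹ * projIntertwiner q p, ?_⟩⟩
  · rw [← mul_assoc, hw', Units.mul_inv]
  · rw [mul_assoc, hp.projIntertwiner_swap_mul hq, ← hw, Units.inv_mul]

end IsIdempotentElem

namespace IsStarProjection

variable {A : Type*}

lemma sub_mul_self_mul_left [Ring A] [StarRing A] {p q : A}
    (hp : IsStarProjection p) (hq : IsStarProjection q) :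
    (p - q) * (p - q) * p = p * (1 - q) * star (p * (1 - q)) := by
  rw [hp.isIdempotentElem.sub_mul_self_mul_left hq.isIdempotentElem, star_mul, star_sub, star_one,
    hp.isSelfAdjoint.star_eq, hq.isSelfAdjoint.star_eq]

lemma isSelfAdjoint_sub_mul_self_mul_left [Ring A] [StarRing A] {p q : A}
    (hp : IsStarProjection p) (hq : IsStarProjection q) :
    IsSelfAdjoint ((p - q) * (p - q) * p) :=
  hp.sub_mul_self_mul_left hq ▸ .mul_star_self _

lemma norm_sub_mul_self_mul_left [NormedRing A] [StarRing A] [CStarRing A] {p q : A}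
    (hp : IsStarProjection p) (hq : IsStarProjection q) :
    ‖(p - q) * (p - q) * p‖ = ‖p * (1 - q)‖ ^ 2 := by
  rw [hp.sub_mul_self_mul_left hq, CStarRing.norm_self_mul_star, sq]

lemma norm_mul_one_sub_eq_of_norm_sub_lt_one [CStarAlgebra A] {p q : A}
    (hp : IsStarProjection p) (hq : IsStarProjection q) (h : ‖p - q‖ < 1) :
    ‖p * (1 - q)‖ = ‖q * (1 - p)‖ := by
  have hspec := hp.isIdempotentElem.spectrum_sub_mul_self_mul_right (S := ℂ) hq.isIdempotentElem
    (hp.isIdempotentElem.isUnit_projIntertwiner hq.isIdempotentElem h)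
  have hdq : (q - p) * (q - p) * q = (p - q) * (p - q) * q := by rw [← neg_sub p q, neg_mul_neg]
  have hsa : IsSelfAdjoint ((p - q) * (p - q) * q) :=
    hdq ▸ hq.isSelfAdjoint_sub_mul_self_mul_left hp
  have hnnnorm : ‖(p - q) * (p - q) * q‖₊ = ‖(p - q) * (p - q) * p‖₊ := by
    rw [← ENNReal.coe_inj, ← hsa.spectralRadius_eq_nnnorm,
      ← (hp.isSelfAdjoint_sub_mul_self_mul_left hq).spectralRadius_eq_nnnorm, spectralRadius,
      hspec, spectralRadius]
  rw [← pow_left_inj₀ (norm_nonneg _) (norm_nonneg _) two_ne_zero,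
    ← hp.norm_sub_mul_self_mul_left hq, ← hq.norm_sub_mul_self_mul_left hp, hdq, ← coe_nnnorm,
    ← hnnnorm, coe_nnnorm]

end IsStarProjection

namespace ContinuousLinearMap

lemma norm_apply_apply_le_of_commute {𝕜 E : Type*} [NontriviallyNormedField 𝕜]
    [SeminormedAddCommGroup E] [NormedSpace 𝕜 E] {T P : E →L[𝕜] E} (hP : IsIdempotentElem P)
    (hT : Commute T P) (x : E) : ‖P (T x)‖ ≤ ‖T * P‖ * ‖P x‖ := by
  have h : P (T x) = (T * P) (P x) := by
    change (P * T) x = (T * P * P) x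
    rw [mul_assoc, hP.eq, hT.eq]
  exact h ▸ le_opNorm _ _

lemma norm_le_max_of_commute_starProjection {𝕜 E : Type*} [RCLike 𝕜] [NormedAddCommGroup E]
    [InnerProductSpace 𝕜 E] {T : E →L[𝕜] E} (K : Submodule 𝕜 E) [K.HasOrthogonalProjection]
    (hT : Commute T K.starProjection) :
    ‖T‖ ≤ max ‖T * K.starProjection‖ ‖T * Kᗮ.starProjection‖ := by
  set m := max ‖T * K.starProjection‖ ‖T * Kᗮ.starProjection‖
  have hm : 0 ≤ m := le_max_of_le_left (norm_nonneg _)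
  have hT' : Commute T Kᗮ.starProjection := by
    rw [K.starProjection_orthogonal']
    exact (Commute.one_right T).sub_right hT
  refine opNorm_le_bound _ hm fun x ↦ le_of_pow_le_pow_left₀ two_ne_zero (by positivity) ?_
  have h₁ := (norm_apply_apply_le_of_commute K.isIdempotentElem_starProjection hT x).trans
    (mul_le_mul_of_nonneg_right (le_max_left _ _ : _ ≤ m) (norm_nonneg _))
  have h₂ := (norm_apply_apply_le_of_commute Kᗮ.isIdempotentElem_starProjection hT' x).trans
    (mul_le_mul_of_nonneg_right (le_max_right _ _ : _ ≤ m) (norm_nonneg _))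
  calc ‖T x‖ ^ 2 = ‖K.starProjection (T x)‖ ^ 2 + ‖Kᗮ.starProjection (T x)‖ ^ 2 :=
        K.norm_sq_eq_add_norm_sq_starProjection _
    _ ≤ (m * ‖K.starProjection x‖) ^ 2 + (m * ‖Kᗮ.starProjection x‖) ^ 2 := by gcongr
    _ = (m * ‖x‖) ^ 2 := by
      rw [mul_pow, mul_pow, mul_pow, ← mul_add, ← K.norm_sq_eq_add_norm_sq_starProjection x]

end ContinuousLinearMap

theorem Submodule.norm_starProjection_sub_eq_max {𝕜 E : Type*} [RCLike 𝕜] [NormedAddCommGroup E]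
    [InnerProductSpace 𝕜 E] [CompleteSpace E] (K L : Submodule 𝕜 E) [K.HasOrthogonalProjection]
    [L.HasOrthogonalProjection] :
    ‖K.starProjection - L.starProjection‖ =
      max ‖K.starProjection * Lᗮ.starProjection‖ ‖L.starProjection * Kᗮ.starProjection‖ := by
  rw [K.starProjection_orthogonal', L.starProjection_orthogonal']
  set p := K.starProjection
  set q := L.starProjection
  have hp : IsStarProjection p := isStarProjection_starProjection
  have hq : IsStarProjection q := isStarProjection_starProjection
  set d := (p - q) * (p - q)
  have hd : ‖d‖ = ‖p - q‖ ^ 2 := by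
    rw [sq, ← CStarRing.norm_self_mul_star, (hp.isSelfAdjoint.sub hq.isSelfAdjoint).star_eq]
  have hdp : ‖d * p‖ = ‖p * (1 - q)‖ ^ 2 := hp.norm_sub_mul_self_mul_left hq
  have hdp' : ‖d * (1 - p)‖ = ‖q * (1 - p)‖ ^ 2 := by
    have h := hp.one_sub.norm_sub_mul_self_mul_left hq.one_sub
    rw [sub_sub_sub_cancel_left, sub_sub_cancel, ← neg_sub p q, neg_mul_neg] at h
    rw [h, ← norm_star, star_mul, hp.one_sub.isSelfAdjoint.star_eq, hq.isSelfAdjoint.star_eq]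
  have hsplit : ‖d‖ ≤ max ‖d * p‖ ‖d * (1 - p)‖ := by
    simpa only [K.starProjection_orthogonal'] using
      norm_le_max_of_commute_starProjection K
        (hp.isIdempotentElem.commute_sub_mul_self_left hq.isIdempotentElem)
  have hmul_le : ∀ {r : E →L[𝕜] E}, IsStarProjection r → ‖d * r‖ ≤ ‖d‖ := fun hr ↦
    (norm_mul_le _ _).trans (mul_le_of_le_one_right (norm_nonneg _) (hr.norm_le _))
  refine le_antisymm (le_of_pow_le_pow_left₀ two_ne_zero (by positivity) ?_)
    (max_le (le_of_pow_le_pow_left₀ two_ne_zero (norm_nonneg _) ?_)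
      (le_of_pow_le_pow_left₀ two_ne_zero (norm_nonneg _) ?_))
  · rw [← hd]
    refine hsplit.trans (max_le ?_ ?_)
    · rw [hdp]; gcongr; exact le_max_left _ _
    · rw [hdp']; gcongr; exact le_max_right _ _
  · rw [← hd, ← hdp]; exact hmul_le hp
  · rw [← hd, ← hdp']; exact hmul_le hp.one_sub

theorem projOf_eq_starProjection {E : Type*} [NormedAddCommGroup E] [InnerProductSpace ℂ E]
    (F : Submodule ℂ E) [CompleteSpace F] : projOf F = F.starProjection :=
  rfl

theorem norms_eq_gap_of_gap_lt_one (F G : Submodule ℂ H)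
    [CompleteSpace F] [CompleteSpace G] (h : ‖projOf F - projOf G‖ < 1) :
    ‖projOf F * projOf Gᗮ‖ = ‖projOf F - projOf G‖ ∧
      ‖projOf G * projOf Fᗮ‖ = ‖projOf F - projOf G‖ := by
  simp only [projOf_eq_starProjection] at h ⊢
  have hsymm :
      ‖F.starProjection * Gᗮ.starProjection‖ = ‖G.starProjection * Fᗮ.starProjection‖ := by
    simpa only [Submodule.starProjection_orthogonal'] using
      isStarProjection_starProjection.norm_mul_one_sub_eq_of_norm_sub_lt_one
        isStarProjection_starProjection h
  rw [Submodule.norm_starProjection_sub_eq_max, ← hsymm, max_self]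
  exact ⟨rfl, rfl⟩
end

section
/- For closed subspaces F, G of a Hilbert space, the spectrum of P_F P_G equals the spectrum of P_F P_G P_F, and both are contained in [0,1]. -/
open ContinuousLinearMap

variable {H : Type*} [NormedAddCommGroup H] [InnerProductSpace ℂ H] [CompleteSpace H]

/-! Write `P = P_F`, `Q = P_G`. Since `PQP = P(PQ)`, the nonzero spectra of `PQ` and `PQP` agree
(`σ(xy) \ {0} = σ(yx) \ {0}`), and `0` lies in both because `P ≠ 1` is an idempotent, so neither
`PQ` nor `PQP` is invertible. Conjugating `0 ≤ Q ≤ 1` by `P` gives `0 ≤ PQP ≤ P ≤ 1`, which places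
the spectrum of `PQP` in `[0, 1]`. -/

theorem IsIdempotentElem.eq_one_of_isUnit_mul {M : Type*} [Monoid M] {p : M}
    (hp : IsIdempotentElem p) {a : M} (h : IsUnit (p * a)) : p = 1 := by
  obtain ⟨b, hb⟩ := h.exists_right_inv
  calc p = p * (p * a * b) := by rw [hb, mul_one]
    _ = p * a * b := by rw [← mul_assoc, ← mul_assoc, hp.eq]
    _ = 1 := hb

theorem IsIdempotentElem.spectrum_mul_mul_self {𝕜 A : Type*} [Field 𝕜] [Ring A] [Algebra 𝕜 A]
    {p : A} (hp : IsIdempotentElem p) (hp1 : p ≠ 1) (a : A) :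
    spectrum 𝕜 (p * a * p) = spectrum 𝕜 (p * a) := by
  have zero_mem (b : A) : (0 : 𝕜) ∈ spectrum 𝕜 (p * b) :=
    spectrum.zero_mem_iff 𝕜 |>.mpr fun h ↦ hp1 (hp.eq_one_of_isUnit_mul h)
  have hnonzero : spectrum 𝕜 (p * a * p) \ {0} = spectrum 𝕜 (p * a) \ {0} := by
    rw [spectrum.nonzero_mul_comm, ← mul_assoc, hp.eq]
  rw [← Set.insert_sdiff_self_of_mem (zero_mem a), ← hnonzero, mul_assoc,
    Set.insert_sdiff_self_of_mem (zero_mem (a * p))]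

theorem IsStarProjection.mul_mul_self_mem_Icc {R : Type*} [Ring R] [PartialOrder R] [StarRing R]
    [StarOrderedRing R] {p q : R} (hp : IsStarProjection p) (hq : IsStarProjection q) :
    p * q * p ∈ Set.Icc (0 : R) 1 :=
  ⟨hp.isSelfAdjoint.conjugate_nonneg hq.nonneg,
    calc p * q * p ≤ p * 1 * p := hp.isSelfAdjoint.conjugate_le_conjugate hq.le_one
      _ = p := by rw [mul_one, hp.isIdempotentElem.eq]
      _ ≤ 1 := hp.le_one⟩

theorem spectrum_subset_Icc_of_mem_Icc {A : Type*} [CStarAlgebra A] [PartialOrder A]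
    [StarOrderedRing A] {a : A} (ha : a ∈ Set.Icc (0 : A) 1) :
    spectrum ℂ a ⊆ Complex.ofReal '' Set.Icc (0 : ℝ) 1 := by
  rw [← (IsSelfAdjoint.of_nonneg ha.1).spectrumRestricts.algebraMap_image]
  exact Set.image_mono fun x hx ↦
    ⟨spectrum_nonneg_of_nonneg ha.1 hx, (CFC.le_one_iff a).mp ha.2 x hx⟩

theorem isStarProjection_projOf (F : Submodule ℂ H) [CompleteSpace F] :
    IsStarProjection (projOf F) :=
  isStarProjection_starProjection

theorem spectrum_prod_eq_spectrum_sym_general (F G : Submodule ℂ H)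
    [CompleteSpace F] [CompleteSpace G]
    (hF1 : F ≠ ⊤) :
    spectrum ℂ (projOf F * projOf G) = spectrum ℂ (projOf F * projOf G * projOf F) ∧
      spectrum ℂ (projOf F * projOf G) ⊆ Complex.ofReal '' Set.Icc (0 : ℝ) 1 := by
  have hF := isStarProjection_projOf F
  have hF_ne_one : projOf F ≠ 1 := fun h ↦
    hF1 <| Submodule.starProjection_inj.mp (h.trans Submodule.starProjection_top'.symm)
  have hsym : spectrum ℂ (projOf F * projOf G * projOf F) = spectrum ℂ (projOf F * projOf G) :=
    hF.isIdempotentElem.spectrum_mul_mul_self hF_ne_one (projOf G)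
  refine ⟨hsym.symm, hsym ▸ spectrum_subset_Icc_of_mem_Icc ?_⟩
  exact hF.mul_mul_self_mem_Icc (isStarProjection_projOf G)

theorem spectrum_prod_eq_spectrum_sym (F G : Submodule ℂ H)
    [CompleteSpace F] [CompleteSpace G]
    (hF0 : F ≠ ⊥) (hF1 : F ≠ ⊤) (hG0 : G ≠ ⊥) (hG1 : G ≠ ⊤) :
    spectrum ℂ (projOf F * projOf G) = spectrum ℂ (projOf F * projOf G * projOf F) ∧
      spectrum ℂ (projOf F * projOf G) ⊆ Complex.ofReal '' Set.Icc (0 : ℝ) 1 :=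
  spectrum_prod_eq_spectrum_sym_general F G hF1
end

section
/- For orthogonal projectors P_F and P_G on a Hilbert space, a real number λ ∉ {−1, 0, 1} belongs to the spectrum of P_G − P_F if and only if 1 − λ² belongs to the spectrum of P_F P_G. -/
/-!
For idempotents `P`, `Q` put `D = Q - P`, `S = P + Q - 1`, `P' = 1 - P`, `Q' = 1 - Q`.
Then `S D = -D S` and `S² + D² = 1`, so `S (λ - D)⁻¹ S - (λ - D)` inverts `λ + D` up to the
scalar `1 - λ²`: for `λ² ≠ 1` the spectrum of `D` is symmetric at `λ`, and
`λ ∈ σ D ↔ λ² ∈ σ (D²)`. Next, `1 - D² = P Q P + P' Q' P'` with orthogonal summands, so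
`λ² ∈ σ (D²)` iff `1 - λ² ∈ σ (P Q) ∪ σ (P' Q')` (off `0`, `σ (P Q P)` and `σ (P Q)` agree).
Finally `σ (P' Q')` and `σ (P Q)` agree off `0` and `1`: for an idempotent `e` and `y = y e`,
`r ∈ σ (e - y) ↔ 1 - r ∈ σ y`, applied to `P' Q' = Q' - P Q'` and to `Q' P = P - Q P`.
-/

open ContinuousLinearMap

variable {H : Type*} [NormedAddCommGroup H] [InnerProductSpace ℂ H] [CompleteSpace H]

section Algebra

variable {𝕜 A : Type*} [Field 𝕜] [Ring A] [Algebra 𝕜 A]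

theorem isUnit_algebraMap_mul_iff {r : 𝕜} (hr : r ≠ 0) (a : A) :
    IsUnit (algebraMap 𝕜 A r * a) ↔ IsUnit a := by
  simpa using Units.isUnit_units_mul (hr.isUnit.map (algebraMap 𝕜 A)).unit a

namespace spectrum

theorem mem_mul_comm_of_ne_zero {r : 𝕜} (hr : r ≠ 0) (a b : A) :
    r ∈ spectrum 𝕜 (a * b) ↔ r ∈ spectrum 𝕜 (b * a) :=
  unit_mem_mul_comm (r := Units.mk0 r hr)

theorem one_sub_mem_one_sub_iff {r : 𝕜} {a : A} :
    1 - r ∈ spectrum 𝕜 (1 - a) ↔ r ∈ spectrum 𝕜 a := by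
  have h : algebraMap 𝕜 A (1 - r) - (1 - a) = -(algebraMap 𝕜 A r - a) := by
    rw [map_sub, map_one]
    abel
  rw [mem_iff, mem_iff, h, IsUnit.neg_iff]

theorem mem_add_iff_of_mul_eq_zero {x y : A} (hxy : x * y = 0) (hyx : y * x = 0) {r : 𝕜}
    (hr : r ≠ 0) : r ∈ spectrum 𝕜 (x + y) ↔ r ∈ spectrum 𝕜 x ∨ r ∈ spectrum 𝕜 y := by
  have hprod {u v : A} (huv : u * v = 0) : (algebraMap 𝕜 A r - u) * (algebraMap 𝕜 A r - v) =
      algebraMap 𝕜 A r * (algebraMap 𝕜 A r - (u + v)) := by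
    rw [sub_mul, mul_sub, mul_sub, huv, ← Algebra.commutes r u]
    noncomm_ring
  have hcomm : Commute (algebraMap 𝕜 A r - x) (algebraMap 𝕜 A r - y) := by
    rw [Commute, SemiconjBy, hprod hxy, hprod hyx, add_comm]
  rw [mem_iff, mem_iff, mem_iff, ← not_and_or, not_iff_not, ← hcomm.isUnit_mul_iff, hprod hxy,
    isUnit_algebraMap_mul_iff hr]

theorem sq_mem_mul_self_iff (z : 𝕜) (d : A) :
    z ^ 2 ∈ spectrum 𝕜 (d * d) ↔ z ∈ spectrum 𝕜 d ∨ -z ∈ spectrum 𝕜 d := by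
  have hprod : (algebraMap 𝕜 A z - d) * (algebraMap 𝕜 A (-z) - d) =
      -(algebraMap 𝕜 A (z ^ 2) - d * d) := by
    simp only [map_neg, map_pow, sub_mul, mul_sub, mul_neg, ← Algebra.commutes z d]
    noncomm_ring
  have hcomm : Commute (algebraMap 𝕜 A z - d) (algebraMap 𝕜 A (-z) - d) :=
    (Algebra.commute_algebraMap_left _ _).sub_left
      ((Algebra.commute_algebraMap_right _ _).sub_right (Commute.refl d))
  rw [mem_iff, mem_iff, mem_iff, ← not_and_or, not_iff_not, ← hcomm.isUnit_mul_iff, hprod,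
    IsUnit.neg_iff]

theorem isUnit_algebraMap_add_of_anticommute {S D : A} (hSD : S * D = -(D * S))
    (hsq : S * S + D * D = 1) {z : 𝕜} (hz : z ^ 2 ≠ 1) (h : IsUnit (algebraMap 𝕜 A z - D)) :
    IsUnit (algebraMap 𝕜 A z + D) := by
  have hZD := Algebra.commutes z D
  have hZS := Algebra.commutes z S
  set Z := algebraMap 𝕜 A z
  set R : A := ↑h.unit⁻¹
  have hleft : (Z + D) * S = S * (Z - D) := by
    rw [add_mul, mul_sub, hSD, hZS]
    abel
  have hright : S * (Z + D) = (Z - D) * S := by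
    rw [mul_add, sub_mul, hSD, hZS]
    abel
  have hsq' : S * S - (Z * Z - D * D) = algebraMap 𝕜 A (1 - z ^ 2) := by
    rw [map_sub, map_one, map_pow, sq, ← hsq]
    abel
  have hmul_left : (Z + D) * (S * R * S - (Z - D)) = algebraMap 𝕜 A (1 - z ^ 2) := by
    rw [← hsq', mul_sub, ← mul_assoc, ← mul_assoc, hleft, mul_assoc S, h.mul_val_inv, mul_one]
    simp only [add_mul, mul_sub, hZD]
    abel
  have hmul_right : (S * R * S - (Z - D)) * (Z + D) = algebraMap 𝕜 A (1 - z ^ 2) := by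
    rw [← hsq', sub_mul, mul_assoc, hright, ← mul_assoc, mul_assoc S, h.val_inv_mul, mul_one]
    simp only [mul_add, sub_mul, hZD]
    abel
  have hcomm : Commute (Z + D) (S * R * S - (Z - D)) := hmul_left.trans hmul_right.symm
  refine (hcomm.isUnit_mul_iff.mp ?_).1
  rw [hmul_left]
  exact (sub_ne_zero.mpr hz.symm).isUnit.map _

theorem neg_mem_iff_of_anticommute {S D : A} (hSD : S * D = -(D * S))
    (hsq : S * S + D * D = 1) {z : 𝕜} (hz : z ^ 2 ≠ 1) :
    -z ∈ spectrum 𝕜 D ↔ z ∈ spectrum 𝕜 D := by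
  have key {w : 𝕜} (hw : w ^ 2 ≠ 1) (h : IsUnit (algebraMap 𝕜 A w - D)) :
      IsUnit (algebraMap 𝕜 A (-w) - D) := by
    rw [map_neg, ← neg_add', IsUnit.neg_iff]
    exact isUnit_algebraMap_add_of_anticommute hSD hsq hw h
  rw [mem_iff, mem_iff, not_iff_not]
  exact ⟨fun h => by simpa using key (by rwa [neg_sq]) h, key hz⟩

end spectrum

namespace IsIdempotentElem

theorem isUnit_add_smul_one_sub {e : A} (he : IsIdempotentElem e) {c : 𝕜} (hc : c ≠ 0) :
    IsUnit (e + c • (1 - e)) := by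
  have hef : e * (1 - e) = 0 := by rw [mul_sub, mul_one, he.eq, sub_self]
  have hfe : (1 - e) * e = 0 := by rw [sub_mul, one_mul, he.eq, sub_self]
  have hinv {c d : 𝕜} (hcd : c * d = 1) : (e + c • (1 - e)) * (e + d • (1 - e)) = 1 := by
    simp only [mul_add, add_mul, mul_smul_comm, smul_mul_assoc, he.eq, he.one_sub.eq, hef, hfe,
      smul_zero, add_zero, zero_add]
    rw [smul_smul, mul_comm, hcd, one_smul, add_sub_cancel]
  exact ⟨⟨_, _, hinv (mul_inv_cancel₀ hc), hinv (inv_mul_cancel₀ hc)⟩, rfl⟩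

theorem mem_spectrum_sub_iff_one_sub_mem_spectrum {e y : A} (he : IsIdempotentElem e)
    (hy : y * e = y) {r : 𝕜} (h0 : r ≠ 0) (h1 : r ≠ 1) :
    r ∈ spectrum 𝕜 (e - y) ↔ 1 - r ∈ spectrum 𝕜 y := by
  have h1' : 1 - r ≠ 0 := sub_ne_zero.mpr h1.symm
  have hyf : y * (1 - e) = 0 := by rw [mul_sub, mul_one, hy, sub_self]
  obtain ⟨u, hu⟩ := he.isUnit_add_smul_one_sub (div_ne_zero (neg_ne_zero.mpr h0) h1')
  have key : (algebraMap 𝕜 A (1 - r) - y) * u = -(algebraMap 𝕜 A r - (e - y)) := by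
    simp only [hu, Algebra.algebraMap_eq_smul_one, sub_mul, mul_add, smul_mul_assoc,
      mul_smul_comm, one_mul, hy, hyf]
    match_scalars <;> field_simp; ring
  rw [spectrum.mem_iff, spectrum.mem_iff, not_iff_not, ← IsUnit.neg_iff, ← key,
    Units.isUnit_mul_units]

theorem mem_spectrum_mul_mul_self_iff {P : A} (hP : IsIdempotentElem P) (a : A) {r : 𝕜}
    (hr : r ≠ 0) : r ∈ spectrum 𝕜 (P * a * P) ↔ r ∈ spectrum 𝕜 (P * a) := by
  rw [spectrum.mem_mul_comm_of_ne_zero hr, ← mul_assoc, hP.eq]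

theorem mem_spectrum_one_sub_mul_one_sub_iff {P Q : A} (hP : IsIdempotentElem P)
    (hQ : IsIdempotentElem Q) {r : 𝕜} (h0 : r ≠ 0) (h1 : r ≠ 1) :
    r ∈ spectrum 𝕜 ((1 - P) * (1 - Q)) ↔ r ∈ spectrum 𝕜 (P * Q) := by
  have hQ' := hQ.one_sub
  calc r ∈ spectrum 𝕜 ((1 - P) * (1 - Q))
      ↔ r ∈ spectrum 𝕜 ((1 - Q) - P * (1 - Q)) := by rw [sub_mul, one_mul]
    _ ↔ 1 - r ∈ spectrum 𝕜 (P * (1 - Q)) :=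
      hQ'.mem_spectrum_sub_iff_one_sub_mem_spectrum (by rw [mul_assoc, hQ'.eq]) h0 h1
    _ ↔ 1 - r ∈ spectrum 𝕜 (P - Q * P) := by
      rw [spectrum.mem_mul_comm_of_ne_zero (sub_ne_zero.mpr h1.symm), sub_mul, one_mul]
    _ ↔ r ∈ spectrum 𝕜 (Q * P) := by
      rw [hP.mem_spectrum_sub_iff_one_sub_mem_spectrum (by rw [mul_assoc, hP.eq])
        (sub_ne_zero.mpr h1.symm) (by simpa using h0), sub_sub_cancel]
    _ ↔ r ∈ spectrum 𝕜 (P * Q) := spectrum.mem_mul_comm_of_ne_zero h0 Q P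

theorem mem_spectrum_sub_iff_one_sub_sq_mem_spectrum_mul {P Q : A} (hP : IsIdempotentElem P)
    (hQ : IsIdempotentElem Q) {z : 𝕜} (hz0 : z ≠ 0) (hz1 : z ^ 2 ≠ 1) :
    z ∈ spectrum 𝕜 (Q - P) ↔ 1 - z ^ 2 ∈ spectrum 𝕜 (P * Q) := by
  have hν0 : 1 - z ^ 2 ≠ 0 := sub_ne_zero.mpr hz1.symm
  have hν1 : 1 - z ^ 2 ≠ 1 := by simpa using hz0
  have hPP (x : A) : P * (P * x) = P * x := by rw [← mul_assoc, hP.eq]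
  have hanti : (P + Q - 1) * (Q - P) = -((Q - P) * (P + Q - 1)) := by
    simp only [mul_sub, sub_mul, mul_add, add_mul, mul_one, one_mul, hP.eq, hQ.eq]
    abel
  have hsq : (P + Q - 1) * (P + Q - 1) + (Q - P) * (Q - P) = 1 := by
    simp only [mul_sub, sub_mul, mul_add, add_mul, mul_one, one_mul, hP.eq, hQ.eq]
    abel
  have hsum : P * Q * P + (1 - P) * (1 - Q) * (1 - P) = 1 - (Q - P) * (Q - P) := by
    simp only [mul_sub, sub_mul, mul_one, one_mul, mul_assoc, hP.eq, hQ.eq]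
    abel
  have horth : P * Q * P * ((1 - P) * (1 - Q) * (1 - P)) = 0 := by
    simp only [mul_sub, sub_mul, mul_one, one_mul, mul_assoc, hP.eq, hPP]
    abel
  have horth' : (1 - P) * (1 - Q) * (1 - P) * (P * Q * P) = 0 := by
    simp only [mul_sub, sub_mul, mul_one, one_mul, mul_assoc, hP.eq, hPP]
    abel
  calc z ∈ spectrum 𝕜 (Q - P)
      ↔ z ∈ spectrum 𝕜 (Q - P) ∨ -z ∈ spectrum 𝕜 (Q - P) :=
        (or_iff_left_of_imp (spectrum.neg_mem_iff_of_anticommute hanti hsq hz1).mp).symm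
    _ ↔ z ^ 2 ∈ spectrum 𝕜 ((Q - P) * (Q - P)) := (spectrum.sq_mem_mul_self_iff z _).symm
    _ ↔ 1 - z ^ 2 ∈ spectrum 𝕜 (P * Q * P + (1 - P) * (1 - Q) * (1 - P)) := by
        rw [hsum, spectrum.one_sub_mem_one_sub_iff]
    _ ↔ 1 - z ^ 2 ∈ spectrum 𝕜 (P * Q) ∨ 1 - z ^ 2 ∈ spectrum 𝕜 ((1 - P) * (1 - Q)) := by
        rw [spectrum.mem_add_iff_of_mul_eq_zero horth horth' hν0,
          hP.mem_spectrum_mul_mul_self_iff _ hν0, hP.one_sub.mem_spectrum_mul_mul_self_iff _ hν0]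
    _ ↔ 1 - z ^ 2 ∈ spectrum 𝕜 (P * Q) := by
        rw [hP.mem_spectrum_one_sub_mul_one_sub_iff hQ hν0 hν1, or_self]

end IsIdempotentElem

end Algebra

theorem spectrum_diff_iff_general (F G : Submodule ℂ H) [CompleteSpace F] [CompleteSpace G]
    (lam : ℝ) (hlam : lam ∉ ({-1, 0, 1} : Set ℝ)) :
    (lam : ℂ) ∈ spectrum ℂ (projOf G - projOf F) ↔
      ((1 - lam ^ 2 : ℝ) : ℂ) ∈ spectrum ℂ (projOf F * projOf G) := by
  simp only [Set.mem_insert_iff, Set.mem_singleton_iff, not_or] at hlam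
  obtain ⟨hlam_ne_neg_one, hlam_ne_zero, hlam_ne_one⟩ := hlam
  have hz0 : (lam : ℂ) ≠ 0 := by exact_mod_cast hlam_ne_zero
  have hz1 : (lam : ℂ) ^ 2 ≠ 1 := by
    rw [Ne, sq_eq_one_iff, not_or]
    exact ⟨by exact_mod_cast hlam_ne_one, by exact_mod_cast hlam_ne_neg_one⟩
  push_cast
  exact F.isIdempotentElem_starProjection.mem_spectrum_sub_iff_one_sub_sq_mem_spectrum_mul
    G.isIdempotentElem_starProjection hz0 hz1

theorem spectrum_diff_iff (F G : Submodule ℂ H) [CompleteSpace F] [CompleteSpace G]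
    (hF0 : F ≠ ⊥) (hF1 : F ≠ ⊤) (hG0 : G ≠ ⊥) (hG1 : G ≠ ⊤)
    (lam : ℝ) (hlam : lam ∉ ({-1, 0, 1} : Set ℝ)) :
    (lam : ℂ) ∈ spectrum ℂ (projOf G - projOf F) ↔
      ((1 - lam ^ 2 : ℝ) : ℂ) ∈ spectrum ℂ (projOf F * projOf G) :=
  spectrum_diff_iff_general F G lam hlam
end

section
/- For nontrivial orthogonal projectors P_F, P_G on a Hilbert space, the spectrum of P_F + P_G, except possibly the point 0, lies in the closed interval [1 − ‖P_F P_G‖, 1 + ‖P_F P_G‖]. -/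
open ContinuousLinearMap

variable {H : Type*} [NormedAddCommGroup H] [InnerProductSpace ℂ H] [CompleteSpace H]

/-!
Write `T = P + Q`. For idempotents one has the identity `T (T - 1)² = PQP + QPQ`, and
`PQP = (QP)* (QP) ≤ ‖QP‖² P` in the C*-order, so `T (T - 1)² ≤ ‖PQ‖² T`. By the continuous
functional calculus every `x ∈ σ(T)` then satisfies `x (x - 1)² ≤ ‖PQ‖² x`; since `T ≥ 0`, a
nonzero `x` is positive and may be cancelled, giving `|x - 1| ≤ ‖PQ‖`.
-/

theorem IsIdempotentElem.add_mul_add_sub_one_sq {R : Type*} [Ring R] {p q : R}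
    (hp : IsIdempotentElem p) (hq : IsIdempotentElem q) :
    (p + q) * (p + q - 1) ^ 2 = p * q * p + q * p * q := by
  have hpa (a : R) : p * (p * a) = p * a := by rw [← mul_assoc, hp.eq]
  have hqa (a : R) : q * (q * a) = q * a := by rw [← mul_assoc, hq.eq]
  simp only [sq, add_mul, mul_add, sub_mul, mul_sub, mul_one, one_mul, mul_assoc, hp.eq, hq.eq,
    hpa, hqa]
  abel

namespace IsStarProjection

variable {A : Type*} [CStarAlgebra A] [PartialOrder A] [StarOrderedRing A] {p q : A}

theorem mul_mul_self_le (hp : IsStarProjection p) (hq : IsStarProjection q) :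
    p * q * p ≤ ‖q * p‖ ^ 2 • p := by
  have hpqp : star (q * p) * (q * p) = p * q * p := by
    rw [star_mul, hp.isSelfAdjoint.star_eq, hq.isSelfAdjoint.star_eq, mul_assoc, ← mul_assoc q q p,
      hq.isIdempotentElem.eq, ← mul_assoc]
  have hpa (a : A) : p * (p * a) = p * a := by rw [← mul_assoc, hp.isIdempotentElem.eq]
  calc p * q * p = p * (star (q * p) * (q * p)) * p := by
        simp only [hpqp, mul_assoc, hp.isIdempotentElem.eq, hpa]
    _ ≤ p * algebraMap ℝ A (‖q * p‖ ^ 2) * p :=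
        hp.isSelfAdjoint.conjugate_le_conjugate CStarAlgebra.star_mul_le_algebraMap_norm_sq
    _ = ‖q * p‖ ^ 2 • p := by
        rw [Algebra.algebraMap_eq_smul_one, mul_smul_comm, mul_one, smul_mul_assoc,
          hp.isIdempotentElem.eq]

theorem add_mul_add_sub_one_sq_le (hp : IsStarProjection p) (hq : IsStarProjection q) :
    (p + q) * (p + q - 1) ^ 2 ≤ ‖p * q‖ ^ 2 • (p + q) := by
  have hqp : ‖q * p‖ = ‖p * q‖ := by
    rw [← norm_star (p * q), star_mul, hp.isSelfAdjoint.star_eq, hq.isSelfAdjoint.star_eq]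
  rw [hp.isIdempotentElem.add_mul_add_sub_one_sq hq.isIdempotentElem, smul_add]
  have hpqp := hp.mul_mul_self_le hq
  rw [hqp] at hpqp
  exact add_le_add hpqp (hq.mul_mul_self_le hp)

theorem abs_sub_one_le_norm_mul (hp : IsStarProjection p) (hq : IsStarProjection q) {x : ℝ}
    (hx : x ∈ spectrum ℝ (p + q)) (hx0 : x ≠ 0) : |x - 1| ≤ ‖p * q‖ := by
  have hpos : 0 < x :=
    (spectrum_nonneg_of_nonneg (add_nonneg hp.nonneg hq.nonneg) hx).lt_of_ne' hx0
  have hle : x * (x - 1) ^ 2 ≤ ‖p * q‖ ^ 2 * x := by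
    have h := hp.add_mul_add_sub_one_sq_le hq
    rw [← cfc_id' ℝ (p + q), ← cfc_const_one ℝ (p + q), ← cfc_sub .., ← cfc_pow .., ← cfc_mul ..,
      ← cfc_smul ..] at h
    exact (cfc_le_iff _ _ (p + q)).mp h x hx
  have hsq : (x - 1) ^ 2 ≤ ‖p * q‖ ^ 2 := le_of_mul_le_mul_left (by linarith) hpos
  exact abs_le_of_sq_le_sq hsq (norm_nonneg _)

end IsStarProjection

theorem spectrum_sum_subset_interval_general (F G : Submodule ℂ H)
    [CompleteSpace F] [CompleteSpace G] :
    ∀ z ∈ spectrum ℂ (projOf F + projOf G), z ≠ 0 →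
      ∃ x : ℝ, z = (x : ℂ) ∧
        1 - ‖projOf F * projOf G‖ ≤ x ∧ x ≤ 1 + ‖projOf F * projOf G‖ := by
  intro z hz hz0
  have hF : IsStarProjection (projOf F) := isStarProjection_starProjection
  have hG : IsStarProjection (projOf G) := isStarProjection_starProjection
  have hzre : z = (z.re : ℂ) := (hF.isSelfAdjoint.add hG.isSelfAdjoint).mem_spectrum_eq_re hz
  have hx : z.re ∈ spectrum ℝ (projOf F + projOf G) :=
    spectrum.of_algebraMap_mem ℂ (by rwa [Complex.coe_algebraMap, ← hzre])
  have hx0 : z.re ≠ 0 := fun h => hz0 (by rw [hzre, h, Complex.ofReal_zero])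
  obtain ⟨hlo, hhi⟩ := abs_sub_le_iff.mp (hF.abs_sub_one_le_norm_mul hG hx hx0)
  exact ⟨z.re, hzre, by linarith, by linarith⟩

theorem spectrum_sum_subset_interval (F G : Submodule ℂ H)
    [CompleteSpace F] [CompleteSpace G] (hF0 : F ≠ ⊥) (hG0 : G ≠ ⊥) :
    ∀ z ∈ spectrum ℂ (projOf F + projOf G), z ≠ 0 →
      ∃ x : ℝ, z = (x : ℂ) ∧
        1 - ‖projOf F * projOf G‖ ≤ x ∧ x ≤ 1 + ‖projOf F * projOf G‖ :=
  spectrum_sum_subset_interval_general F G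
end

section
/- Let U ⊆ F and V ⊆ G be closed subspaces with P_F V ⊆ U and P_G U ⊆ V (a pair of principal invariant subspaces). Then U is an invariant subspace of P_F P_G (i.e., P_F P_G U ⊆ U), and V ⊖ closure(P_G U) ⊆ G ∩ F⊥. -/
/-!
The first claim is `P_F (P_G u) ∈ P_F V ⊆ U`. For the second, take `v ∈ V` orthogonal to
`P_G U`. Then `P_F v ∈ U`, so `v ⊥ P_G P_F v`; since `v ∈ G` and `P_G` is self-adjoint, this says
`⟪P_F v, v⟫ = ‖P_F v‖² = 0`, i.e. `v ∈ Fᗮ`. Note that `projOf F` is `F.starProjection` by definition.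
-/

open ContinuousLinearMap

variable {H : Type*} [NormedAddCommGroup H] [InnerProductSpace ℂ H] [CompleteSpace H]

namespace Submodule

variable {𝕜 E : Type*} [RCLike 𝕜] [NormedAddCommGroup E] [InnerProductSpace 𝕜 E]
  (K : Submodule 𝕜 E) [K.HasOrthogonalProjection]

theorem inner_starProjection_left_of_mem_right {v : E} (hv : v ∈ K) (u : E) :
    inner 𝕜 (K.starProjection u) v = inner 𝕜 u v := by
  rw [inner_starProjection_left_eq_right, starProjection_eq_self_iff.mpr hv]

theorem mem_orthogonal_of_inner_starProjection_self_eq_zero {v : E}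
    (h : inner 𝕜 (K.starProjection v) v = 0) : v ∈ Kᗮ := by
  have hnorm : ‖K.orthogonalProjectionOnto v‖ ^ 2 = 0 := by
    rw [← re_inner_starProjection_eq_normSq, h, map_zero]
  exact orthogonalProjectionOnto_eq_zero_iff.mp
    (norm_eq_zero.mp ((pow_eq_zero_iff two_ne_zero).mp hnorm))

end Submodule

theorem principal_invariant_subspaces_invariant_general (F G U V : Submodule ℂ H)
    [CompleteSpace F] [CompleteSpace G]
    (hVG : V ≤ G)
    (hPF : ∀ v ∈ V, projOf F v ∈ U) (hPG : ∀ u ∈ U, projOf G u ∈ V) :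
    (∀ u ∈ U, (projOf F * projOf G) u ∈ U) ∧
      V ⊓ ((U.map ((projOf G : H →L[ℂ] H) : H →ₗ[ℂ] H)).topologicalClosure)ᗮ ≤
        G ⊓ Fᗮ := by
  refine ⟨fun u hu => hPF _ (hPG u hu), ?_⟩
  rintro v ⟨hvV, hv⟩
  refine ⟨hVG hvV, F.mem_orthogonal_of_inner_starProjection_self_eq_zero ?_⟩
  have hPGPFv : projOf G (projOf F v) ∈
      (U.map ((projOf G : H →L[ℂ] H) : H →ₗ[ℂ] H)).topologicalClosure :=
    Submodule.le_topologicalClosure _ ⟨projOf F v, hPF v hvV, rfl⟩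
  calc inner ℂ (F.starProjection v) v
      = inner ℂ (G.starProjection (F.starProjection v)) v :=
        (G.inner_starProjection_left_of_mem_right (hVG hvV) _).symm
    _ = 0 := hv _ hPGPFv

theorem principal_invariant_subspaces_invariant (F G U V : Submodule ℂ H)
    [CompleteSpace F] [CompleteSpace G]
    (hUF : U ≤ F) (hVG : V ≤ G)
    (hU : IsClosed (U : Set H)) (hV : IsClosed (V : Set H))
    (hPF : ∀ v ∈ V, projOf F v ∈ U) (hPG : ∀ u ∈ U, projOf G u ∈ V) :
    (∀ u ∈ U, (projOf F * projOf G) u ∈ U) ∧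
      V ⊓ ((U.map ((projOf G : H →L[ℂ] H) : H →ₗ[ℂ] H)).topologicalClosure)ᗮ ≤
        G ⊓ Fᗮ :=
  principal_invariant_subspaces_invariant_general F G U V hVG hPF hPG
end
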